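/- arXiv:2204.04482 — 3 statements merged into one kernel-verified Lean document; each statement's English description precedes it below -/
import Mathlib

section
/- Let V be a real vector space with a quaternionic structure I₁, I₂, I₃. An ℝ-linear endomorphism Ψ of V satisfies Ψ − I₁∘Ψ∘I₁ − I₂∘Ψ∘I₂ − I₃∘Ψ∘I₃ = 0 (the characterizing equation of the [−1]-component Ψ = Ψ_{[−1]}) if and only if Ψ can be written as Ψ = Ψ¹ + Ψ² + Ψ³, where for each cyclic permutation (i,j,k) of (1,2,3) the endomorphism Ψⁱ commutes with I_i and anticommutes with I_j and I_k. -/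
section Aux

variable {R : Type*} [Ring R]

lemma conj_comm_aux {X Y : R} (hc : X * Y = Y * X) (hY : Y * Y = -1) :
    Y * X * Y = -X := by
  rw [show Y * X = X * Y from hc.symm, mul_assoc, hY, mul_neg_one]

lemma conj_anti_aux {X Y : R} (hc : X * Y = -(Y * X)) (hY : Y * Y = -1) :
    Y * X * Y = X := by
  have : Y * X = -(X * Y) := by rw [hc, neg_neg]
  rw [this, neg_mul, mul_assoc, hY, mul_neg_one, neg_neg]

/-- For a cyclic triple, `A = Ψ - IΨI + JΨJ + KΨK` commutes with `I` and
anticommutes with `J` and `K`. -/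
lemma quat_component_aux (I J K Ψ : R)
    (hI : I * I = -1) (hJ : J * J = -1) (hK : K * K = -1)
    (hIJ : I * J = K) (hJI : J * I = -K)
    (hJK : J * K = I) (hKJ : K * J = -I)
    (hKI : K * I = J) (hIK : I * K = -J) :
    ((Ψ - I * Ψ * I + J * Ψ * J + K * Ψ * K) * I
      = I * (Ψ - I * Ψ * I + J * Ψ * J + K * Ψ * K)) ∧
    ((Ψ - I * Ψ * I + J * Ψ * J + K * Ψ * K) * J
      = -(J * (Ψ - I * Ψ * I + J * Ψ * J + K * Ψ * K))) ∧
    ((Ψ - I * Ψ * I + J * Ψ * J + K * Ψ * K) * K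
      = -(K * (Ψ - I * Ψ * I + J * Ψ * J + K * Ψ * K))) := by
  have hI' : ∀ z : R, I * (I * z) = -z := fun z => by rw [← mul_assoc, hI, neg_one_mul]
  have hJ' : ∀ z : R, J * (J * z) = -z := fun z => by rw [← mul_assoc, hJ, neg_one_mul]
  have hK' : ∀ z : R, K * (K * z) = -z := fun z => by rw [← mul_assoc, hK, neg_one_mul]
  have hIJ' : ∀ z : R, I * (J * z) = K * z := fun z => by rw [← mul_assoc, hIJ]
  have hJI' : ∀ z : R, J * (I * z) = -(K * z) := fun z => by rw [← mul_assoc, hJI, neg_mul]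
  have hJK' : ∀ z : R, J * (K * z) = I * z := fun z => by rw [← mul_assoc, hJK]
  have hKJ' : ∀ z : R, K * (J * z) = -(I * z) := fun z => by rw [← mul_assoc, hKJ, neg_mul]
  have hKI' : ∀ z : R, K * (I * z) = J * z := fun z => by rw [← mul_assoc, hKI]
  have hIK' : ∀ z : R, I * (K * z) = -(J * z) := fun z => by rw [← mul_assoc, hIK, neg_mul]
  refine ⟨?_, ?_, ?_⟩ <;>
  · simp only [sub_mul, add_mul, mul_sub, mul_add, mul_assoc, hI, hJ, hK, hIJ, hJI, hJK,
      hKJ, hKI, hIK, hI', hJ', hK', hIJ', hJI', hJK', hKJ', hKI', hIK',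
      mul_neg, neg_mul, mul_neg_one, mul_one, neg_neg]
    abel

end Aux

/-- For a real vector space `V` with a quaternionic structure `I₁, I₂, I₃`,
an ℝ-linear endomorphism `Ψ` satisfies `Ψ − I₁∘Ψ∘I₁ − I₂∘Ψ∘I₂ − I₃∘Ψ∘I₃ = 0`
(the characterizing equation of the `[−1]`-component `Ψ = Ψ_{[−1]}`) if and only if
`Ψ = Ψ¹ + Ψ² + Ψ³` where, for each cyclic permutation `(i,j,k)` of `(1,2,3)`, the
endomorphism `Ψⁱ` commutes with `I_i` and anticommutes with `I_j` and `I_k`. -/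
theorem minus_one_component_characterization
    {V : Type*} [AddCommGroup V] [Module ℝ V]
    (I₁ I₂ I₃ : Module.End ℝ V)
    (h1 : I₁ * I₁ = -1) (h2 : I₂ * I₂ = -1) (h3 : I₃ * I₃ = -1)
    (h12 : I₁ * I₂ = I₃) (h21 : I₂ * I₁ = -I₃)
    (Ψ : Module.End ℝ V) :
    Ψ - (I₁ * Ψ * I₁ + I₂ * Ψ * I₂ + I₃ * Ψ * I₃) = 0 ↔
      ∃ Ψ₁ Ψ₂ Ψ₃ : Module.End ℝ V,
        Ψ = Ψ₁ + Ψ₂ + Ψ₃ ∧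
        (Ψ₁ * I₁ = I₁ * Ψ₁ ∧ Ψ₁ * I₂ = -(I₂ * Ψ₁) ∧ Ψ₁ * I₃ = -(I₃ * Ψ₁)) ∧
        (Ψ₂ * I₂ = I₂ * Ψ₂ ∧ Ψ₂ * I₃ = -(I₃ * Ψ₂) ∧ Ψ₂ * I₁ = -(I₁ * Ψ₂)) ∧
        (Ψ₃ * I₃ = I₃ * Ψ₃ ∧ Ψ₃ * I₁ = -(I₁ * Ψ₃) ∧ Ψ₃ * I₂ = -(I₂ * Ψ₃)) := by
  -- derived multiplication rules
  have h31 : I₃ * I₁ = I₂ := by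
    have : I₃ = -(I₂ * I₁) := by rw [h21, neg_neg]
    rw [this, neg_mul, mul_assoc, h1, mul_neg_one, neg_neg]
  have h13 : I₁ * I₃ = -I₂ := by
    rw [← h12, ← mul_assoc, h1, neg_one_mul]
  have h32 : I₃ * I₂ = -I₁ := by
    rw [← h12, mul_assoc, h2, mul_neg_one]
  have h23 : I₂ * I₃ = I₁ := by
    rw [← h12, ← mul_assoc, h21, neg_mul, h32, neg_neg]
  constructor
  · intro h
    have hS : I₁ * Ψ * I₁ + I₂ * Ψ * I₂ + I₃ * Ψ * I₃ = Ψ := by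
      have := sub_eq_zero.mp h
      exact this.symm
    set A₁ := Ψ - I₁ * Ψ * I₁ + I₂ * Ψ * I₂ + I₃ * Ψ * I₃ with hA₁
    set A₂ := Ψ - I₂ * Ψ * I₂ + I₃ * Ψ * I₃ + I₁ * Ψ * I₁ with hA₂
    set A₃ := Ψ - I₃ * Ψ * I₃ + I₁ * Ψ * I₁ + I₂ * Ψ * I₂ with hA₃
    obtain ⟨c1, c2, c3⟩ := quat_component_aux I₁ I₂ I₃ Ψ h1 h2 h3 h12 h21 h23 h32 h31 h13
    obtain ⟨d1, d2, d3⟩ := quat_component_aux I₂ I₃ I₁ Ψ h2 h3 h1 h23 h32 h31 h13 h12 h21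
    obtain ⟨e1, e2, e3⟩ := quat_component_aux I₃ I₁ I₂ Ψ h3 h1 h2 h31 h13 h12 h21 h23 h32
    refine ⟨(4:ℝ)⁻¹ • A₁, (4:ℝ)⁻¹ • A₂, (4:ℝ)⁻¹ • A₃, ?_, ?_, ?_, ?_⟩
    · have hsum : A₁ + A₂ + A₃ = (4:ℝ) • Ψ := by
        have e : A₁ + A₂ + A₃
            = Ψ + Ψ + Ψ + (I₁ * Ψ * I₁ + I₂ * Ψ * I₂ + I₃ * Ψ * I₃) := by
          rw [hA₁, hA₂, hA₃]; abel
        rw [e, hS]; module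
      rw [← smul_add, ← smul_add, hsum, smul_smul]
      norm_num
    · refine ⟨?_, ?_, ?_⟩ <;>
        rw [smul_mul_assoc, mul_smul_comm] <;>
        first
          | (rw [c1])
          | (rw [c2, smul_neg]) | (rw [c3, smul_neg])
    · refine ⟨?_, ?_, ?_⟩ <;>
        rw [smul_mul_assoc, mul_smul_comm] <;>
        first
          | (rw [d1])
          | (rw [d2, smul_neg]) | (rw [d3, smul_neg])
    · refine ⟨?_, ?_, ?_⟩ <;>
        rw [smul_mul_assoc, mul_smul_comm] <;>
        first
          | (rw [e1])
          | (rw [e2, smul_neg]) | (rw [e3, smul_neg])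
  · rintro ⟨Ψ₁, Ψ₂, Ψ₃, rfl, ⟨c1, c2, c3⟩, ⟨d2, d3, d1⟩, ⟨e3, e1, e2⟩⟩
    have r11 := conj_comm_aux c1 h1
    have r12 := conj_anti_aux c2 h2
    have r13 := conj_anti_aux c3 h3
    have r22 := conj_comm_aux d2 h2
    have r23 := conj_anti_aux d3 h3
    have r21 := conj_anti_aux d1 h1
    have r33 := conj_comm_aux e3 h3
    have r31 := conj_anti_aux e1 h1
    have r32 := conj_anti_aux e2 h2
    have expand : ∀ X : Module.End ℝ V,
        X * (Ψ₁ + Ψ₂ + Ψ₃) * X = X * Ψ₁ * X + X * Ψ₂ * X + X * Ψ₃ * X := by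
      intro X
      simp only [mul_add, add_mul]
    rw [expand, expand, expand, r11, r12, r13, r21, r22, r23, r31, r32, r33]
    abel
end

section
/- Let V be a real vector space with a quaternionic structure I₁, I₂, I₃ and let Υ(Ψ) = I₁∘Ψ∘I₁ + I₂∘Ψ∘I₂ + I₃∘Ψ∘I₃. Every ℝ-linear endomorphism Ψ of V decomposes uniquely as Ψ = Ψ_{[3]} + Ψ_{[−1]}, where 3·Ψ_{[3]} + Υ(Ψ_{[3]}) = 0 and Ψ_{[−1]} − Υ(Ψ_{[−1]}) = 0; explicitly Ψ_{[3]} = (Ψ − Υ(Ψ))/4 and Ψ_{[−1]} = (3·Ψ + Υ(Ψ))/4. -/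
/-- For a real vector space `V` with a quaternionic structure `I₁, I₂, I₃`
and Casimir operator `Υ(Ψ) = I₁∘Ψ∘I₁ + I₂∘Ψ∘I₂ + I₃∘Ψ∘I₃`, every ℝ-linear
endomorphism `Ψ` decomposes uniquely as `Ψ = Ψ_{[3]} + Ψ_{[−1]}` with
`3·Ψ_{[3]} + Υ(Ψ_{[3]}) = 0` and `Ψ_{[−1]} − Υ(Ψ_{[−1]}) = 0`; explicitly
`Ψ_{[3]} = (Ψ − Υ(Ψ))/4` and `Ψ_{[−1]} = (3·Ψ + Υ(Ψ))/4`. -/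
theorem eigenspace_decomposition_casimir
    {V : Type*} [AddCommGroup V] [Module ℝ V]
    (I₁ I₂ I₃ : Module.End ℝ V)
    (h1 : I₁ * I₁ = -1) (h2 : I₂ * I₂ = -1) (h3 : I₃ * I₃ = -1)
    (h12 : I₁ * I₂ = I₃) (h21 : I₂ * I₁ = -I₃)
    (Υ : Module.End ℝ V → Module.End ℝ V)
    (hΥ : ∀ Ψ, Υ Ψ = I₁ * Ψ * I₁ + I₂ * Ψ * I₂ + I₃ * Ψ * I₃)
    (Ψ : Module.End ℝ V) :
    (∃! p : Module.End ℝ V × Module.End ℝ V,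
      Ψ = p.1 + p.2 ∧ (3 : ℝ) • p.1 + Υ p.1 = 0 ∧ p.2 - Υ p.2 = 0) ∧
    (3 : ℝ) • ((4 : ℝ)⁻¹ • (Ψ - Υ Ψ)) + Υ ((4 : ℝ)⁻¹ • (Ψ - Υ Ψ)) = 0 ∧
    ((4 : ℝ)⁻¹ • ((3 : ℝ) • Ψ + Υ Ψ)) - Υ ((4 : ℝ)⁻¹ • ((3 : ℝ) • Ψ + Υ Ψ)) = 0 ∧
    Ψ = (4 : ℝ)⁻¹ • (Ψ - Υ Ψ) + (4 : ℝ)⁻¹ • ((3 : ℝ) • Ψ + Υ Ψ) := by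
  -- derived quaternion multiplication table
  have h32 : I₃ * I₂ = -I₁ := by
    have : I₃ * I₂ = (I₁ * I₂) * I₂ := by rw [h12]
    rw [this, mul_assoc, h2]; noncomm_ring
  have h23 : I₂ * I₃ = I₁ := by
    have : I₂ * I₃ = (I₂ * I₁) * I₂ := by rw [← h12]; noncomm_ring
    rw [this, h21]
    have : -I₃ * I₂ = -(I₃ * I₂) := by noncomm_ring
    rw [this, h32]; exact neg_neg _
  have h13 : I₁ * I₃ = -I₂ := by
    have : I₁ * I₃ = (I₁ * I₁) * I₂ := by rw [mul_assoc, h12]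
    rw [this, h1]; noncomm_ring
  have h31 : I₃ * I₁ = I₂ := by
    have : I₃ * I₁ = I₁ * (I₂ * I₁) := by rw [← h12]; noncomm_ring
    rw [this, h21]
    have : I₁ * -I₃ = -(I₁ * I₃) := by noncomm_ring
    rw [this, h13]; exact neg_neg _
  -- linearity of Υ
  have hadd : ∀ X Y, Υ (X + Y) = Υ X + Υ Y := by
    intro X Y; rw [hΥ, hΥ, hΥ]; noncomm_ring
  have hsub : ∀ X Y, Υ (X - Y) = Υ X - Υ Y := by
    intro X Y; rw [hΥ, hΥ, hΥ]; noncomm_ring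
  have hsmul : ∀ (c : ℝ) X, Υ (c • X) = c • Υ X := by
    intro c X; rw [hΥ, hΥ]
    simp [mul_smul_comm, smul_mul_assoc, smul_add]
  -- the quadratic identity Υ² = 3 - 2Υ
  have key : ∀ X : Module.End ℝ V, Υ (Υ X) = (3 : ℝ) • X - (2 : ℝ) • Υ X := by
    intro X
    have conj : ∀ (A B C D : Module.End ℝ V), A * (B * X * B) * A = (A * B) * X * (B * A) := by
      intro A B C D; noncomm_ring
    have e1 : I₁ * (I₁ * X * I₁) * I₁ = X := by
      rw [conj I₁ I₁ I₁ I₁, h1]; noncomm_ring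
    have e2 : I₂ * (I₂ * X * I₂) * I₂ = X := by
      rw [conj I₂ I₂ I₂ I₂, h2]; noncomm_ring
    have e3 : I₃ * (I₃ * X * I₃) * I₃ = X := by
      rw [conj I₃ I₃ I₃ I₃, h3]; noncomm_ring
    have e12 : I₁ * (I₂ * X * I₂) * I₁ = -(I₃ * X * I₃) := by
      rw [conj I₁ I₂ I₁ I₁, h12, h21]; noncomm_ring
    have e21 : I₂ * (I₁ * X * I₁) * I₂ = -(I₃ * X * I₃) := by
      rw [conj I₂ I₁ I₁ I₁, h21, h12]; noncomm_ring
    have e13 : I₁ * (I₃ * X * I₃) * I₁ = -(I₂ * X * I₂) := by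
      rw [conj I₁ I₃ I₁ I₁, h13, h31]; noncomm_ring
    have e31 : I₃ * (I₁ * X * I₁) * I₃ = -(I₂ * X * I₂) := by
      rw [conj I₃ I₁ I₁ I₁, h31, h13]; noncomm_ring
    have e23 : I₂ * (I₃ * X * I₃) * I₂ = -(I₁ * X * I₁) := by
      rw [conj I₂ I₃ I₁ I₁, h23, h32]; noncomm_ring
    have e32 : I₃ * (I₂ * X * I₂) * I₃ = -(I₁ * X * I₁) := by
      rw [conj I₃ I₂ I₁ I₁, h32, h23]; noncomm_ring
    have expand : Υ (Υ X) =
        I₁ * (I₁ * X * I₁) * I₁ + I₁ * (I₂ * X * I₂) * I₁ + I₁ * (I₃ * X * I₃) * I₁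
        + (I₂ * (I₁ * X * I₁) * I₂ + I₂ * (I₂ * X * I₂) * I₂ + I₂ * (I₃ * X * I₃) * I₂)
        + (I₃ * (I₁ * X * I₁) * I₃ + I₃ * (I₂ * X * I₂) * I₃ + I₃ * (I₃ * X * I₃) * I₃) := by
      rw [hΥ (Υ X), hΥ X]; noncomm_ring
    rw [expand, e1, e2, e3, e12, e21, e13, e31, e23, e32, hΥ X]
    module
  refine ⟨⟨((4 : ℝ)⁻¹ • (Ψ - Υ Ψ), (4 : ℝ)⁻¹ • ((3 : ℝ) • Ψ + Υ Ψ)), ?_, ?_⟩, ?_, ?_, ?_⟩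
  · refine ⟨by module, ?_, ?_⟩
    · simp only [hsmul, hsub, key]; module
    · simp only [hsmul, hadd, key]; module
  · rintro ⟨a, b⟩ ⟨hab, ha, hb⟩
    simp only at hab ha hb ⊢
    have ha' : Υ a = -((3 : ℝ) • a) := eq_neg_of_add_eq_zero_right ha
    have hb' : Υ b = b := (sub_eq_zero.mp hb).symm
    have : Ψ - Υ Ψ = (4 : ℝ) • a := by
      rw [hab, hadd, ha', hb']; module
    have h2' : (3 : ℝ) • Ψ + Υ Ψ = (4 : ℝ) • b := by
      rw [hab, hadd, ha', hb']; module
    refine Prod.ext ?_ ?_ <;> simp only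
    · rw [this]; module
    · rw [h2']; module
  · simp only [hsmul, hsub, key]; module
  · simp only [hsmul, hadd, key]; module
  · module
end

section
/- Let V be a real vector space with a quaternionic structure I₁, I₂, I₃, and let B be an ℝ-bilinear form on V. Then B(I_sX, I_sY) = B(X,Y) for all X, Y ∈ V and all s = 1, 2, 3 if and only if Σ_{s=1}^{3} B(I_sX, I_sY) = 3·B(X,Y) for all X, Y ∈ V (the bilinear-form version of the characterizing equation of the [3]-component). -/
/-- For a real vector space `V` with a quaternionic structure `I₁, I₂, I₃`
and an ℝ-bilinear form `B` on `V`: `B(I_sX, I_sY) = B(X,Y)` for all `X, Y` and all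
`s = 1, 2, 3` if and only if `Σ_{s=1}^{3} B(I_sX, I_sY) = 3·B(X,Y)` for all `X, Y`. -/
theorem bilinear_three_component_characterization
    {V : Type*} [AddCommGroup V] [Module ℝ V]
    (I₁ I₂ I₃ : Module.End ℝ V)
    (h1 : I₁ * I₁ = -1) (h2 : I₂ * I₂ = -1) (h3 : I₃ * I₃ = -1)
    (h12 : I₁ * I₂ = I₃) (h21 : I₂ * I₁ = -I₃)
    (B : V →ₗ[ℝ] V →ₗ[ℝ] ℝ) :
    (∀ X Y : V, B (I₁ X) (I₁ Y) = B X Y ∧ B (I₂ X) (I₂ Y) = B X Y ∧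
      B (I₃ X) (I₃ Y) = B X Y) ↔
    (∀ X Y : V, B (I₁ X) (I₁ Y) + B (I₂ X) (I₂ Y) + B (I₃ X) (I₃ Y) = 3 * B X Y) := by
  constructor
  · intro h X Y
    obtain ⟨a, b, c⟩ := h X Y
    rw [a, b, c]; ring
  · intro h
    -- derived relations
    have e11 : ∀ X : V, I₁ (I₁ X) = -X := fun X => by
      have := LinearMap.ext_iff.mp h1 X
      simpa [Module.End.mul_apply] using this
    have e22 : ∀ X : V, I₂ (I₂ X) = -X := fun X => by
      have := LinearMap.ext_iff.mp h2 X
      simpa [Module.End.mul_apply] using this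
    have e33 : ∀ X : V, I₃ (I₃ X) = -X := fun X => by
      have := LinearMap.ext_iff.mp h3 X
      simpa [Module.End.mul_apply] using this
    have e21 : ∀ X : V, I₂ (I₁ X) = -(I₃ X) := fun X => by
      have := LinearMap.ext_iff.mp h21 X
      simpa [Module.End.mul_apply] using this
    have e12 : ∀ X : V, I₁ (I₂ X) = I₃ X := fun X => by
      have := LinearMap.ext_iff.mp h12 X
      simpa [Module.End.mul_apply] using this
    -- I₃ I₁ = I₂ : I₃ (I₁ X) = I₁ (I₂ (I₁ X)) ... compute directly
    have h13 : I₁ * I₃ = -I₂ := by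
      rw [← h12, ← mul_assoc, h1, neg_one_mul]
    have e13 : ∀ X : V, I₁ (I₃ X) = -(I₂ X) := fun X => by
      have := LinearMap.ext_iff.mp h13 X
      simpa [Module.End.mul_apply] using this
    have h31 : I₃ * I₁ = I₂ := by
      rw [← h12, mul_assoc, h21, mul_neg, h13, neg_neg]
    have e31 : ∀ X : V, I₃ (I₁ X) = I₂ X := fun X => by
      have := LinearMap.ext_iff.mp h31 X
      simpa [Module.End.mul_apply] using this
    have h32 : I₃ * I₂ = -I₁ := by
      rw [← h12, mul_assoc, h2, mul_neg_one]
    have e32 : ∀ X : V, I₃ (I₂ X) = -(I₁ X) := fun X => by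
      have := LinearMap.ext_iff.mp h32 X
      simpa [Module.End.mul_apply] using this
    intro X Y
    have hXY := h X Y
    have hA := h (I₁ X) (I₁ Y)
    have hB := h (I₂ X) (I₂ Y)
    rw [e11, e11, e21, e21, e31, e31] at hA
    rw [e12, e12, e22, e22, e32, e32] at hB
    simp only [map_neg, LinearMap.neg_apply, neg_neg] at hA hB
    refine ⟨by linarith, by linarith, by linarith⟩
end
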